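/- For every positive integer n, |g⁻¹(n)| = ∑_{d∣n} μ(n/d)² · C_Ω(d). -/

import Mathlib

/-!
Write `g = ζ * (ε + π)` with `π` the indicator of the primes, since
`∑_{d ∣ n} (ε + π)(d) = 1 + ω(n)`. Then `g⁻¹ = μ * (ε + π)⁻¹`, and
`(ε + π)⁻¹(n) = (-1)^Ω(n) C_Ω(n)` because `C_Ω` obeys the recursion
`C_Ω(n) = ∑_{p ∣ n} C_Ω(n/p)` (it counts the ordered factorizations of `n` into primes).
Finally `μ(m) = (-1)^Ω(m) μ(m)²`, so every term of `∑_{d ∣ n} μ(n/d) (-1)^Ω(d) C_Ω(d)` carries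
the same sign `(-1)^Ω(n)`.
-/

/-- `C_Ω(n) = Ω(n)! / (α₁! ⋯ α_r!)` is the multinomial coefficient of the exponents in the
prime factorization `n = p₁^{α₁} ⋯ p_r^{α_r}`; by convention `C_Ω(1) = 1`. -/
noncomputable def COmega (n : ℕ) : ℝ :=
  ((ArithmeticFunction.cardFactors n).factorial : ℝ) /
    ∏ p ∈ n.primeFactors, ((n.factorization p).factorial : ℝ)

open ArithmeticFunction Finset
open scoped ArithmeticFunction.Omega ArithmeticFunction.omega ArithmeticFunction.Moebius
  ArithmeticFunction.zeta Nat

lemma prod_factorial_factorization_mul_prime {m p : ℕ} (hm : m ≠ 0) (hp : p.Prime) :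
    ∏ q ∈ (m * p).primeFactors, ((m * p).factorization q)! =
      (m.factorization p + 1) * ∏ q ∈ m.primeFactors, (m.factorization q)! := by
  simp only [← Nat.prod_factorization_eq_prod_primeFactors (f := fun _ k => k !)]
  have hfac : (m * p).factorization = m.factorization + Finsupp.single p 1 := by
    rw [Nat.factorization_mul hm hp.ne_zero, hp.factorization]
  have herase : ((m * p).factorization).erase p = m.factorization.erase p := by
    rw [hfac, Finsupp.erase_add, Finsupp.erase_single, add_zero]
  rw [← Finsupp.mul_prod_erase' _ p _ (fun _ => Nat.factorial_zero),
    ← Finsupp.mul_prod_erase' m.factorization p _ (fun _ => Nat.factorial_zero), herase, hfac,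
    Finsupp.add_apply, Finsupp.single_eq_same, Nat.factorial_succ, mul_assoc]

lemma COmega_mul_prime {m p : ℕ} (hm : m ≠ 0) (hp : p.Prime) :
    (m.factorization p + 1) * COmega (m * p) = (Ω m + 1) * COmega m := by
  have hΩ : Ω (m * p) = Ω m + 1 := by
    rw [cardFactors_mul hm hp.ne_zero, cardFactors_apply_prime hp]
  have hD : (0 : ℝ) < ∏ q ∈ m.primeFactors, ((m.factorization q)! : ℝ) := by positivity
  rw [COmega, COmega, hΩ, ← Nat.cast_prod, prod_factorial_factorization_mul_prime hm hp,
    Nat.factorial_succ]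
  push_cast
  field_simp

lemma COmega_nonneg (n : ℕ) : 0 ≤ COmega n := by
  unfold COmega
  positivity

lemma COmega_eq_sum_primeFactors {n : ℕ} (hn : 1 < n) :
    COmega n = ∑ p ∈ n.primeFactors, COmega (n / p) := by
  have hΩ : (Ω n : ℝ) ≠ 0 := by exact_mod_cast (cardFactors_pos_iff_one_lt.mpr hn).ne'
  have hterm : ∀ p ∈ n.primeFactors,
      (n.factorization p : ℝ) * COmega n = Ω n * COmega (n / p) := by
    intro p hp
    obtain ⟨hp', ⟨m, rfl⟩, hn0⟩ := Nat.mem_primeFactors.mp hp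
    have hm : m ≠ 0 := right_ne_zero_of_mul hn0
    rw [mul_comm p m, Nat.mul_div_cancel m hp'.pos, Nat.factorization_mul hm hp'.ne_zero,
      cardFactors_mul hm hp'.ne_zero, cardFactors_apply_prime hp', hp'.factorization]
    push_cast
    simpa using COmega_mul_prime hm hp'
  apply mul_left_cancel₀ hΩ
  rw [mul_sum, ← sum_congr rfl hterm, ← sum_mul]
  congr 1
  rw [cardFactors_eq_sum_factorization, Finsupp.sum, Nat.support_factorization]
  push_cast; rfl

def primeIndicator (R : Type*) [Semiring R] : ArithmeticFunction R :=
  ⟨fun n => if n.Prime then 1 else 0, by simp [Nat.not_prime_zero]⟩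

lemma primeIndicator_mul_apply {R : Type*} [Semiring R] (f : ArithmeticFunction R) (n : ℕ) :
    (primeIndicator R * f) n = ∑ p ∈ n.primeFactors, f (n / p) := by
  rw [mul_apply, Nat.sum_divisorsAntidiagonal (fun a b => primeIndicator R a * f b),
    Nat.primeFactors_eq_to_filter_divisors_prime, sum_filter]
  refine sum_congr rfl fun d _ => ?_
  simp only [primeIndicator, coe_mk, ite_mul, one_mul, zero_mul]

lemma coe_zeta_mul_one_add_primeIndicator_apply {R : Type*} [CommSemiring R] {n : ℕ}
    (hn : n ≠ 0) :
    ((ζ : ArithmeticFunction R) * (1 + primeIndicator R)) n = ω n + 1 := by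
  rw [mul_add, mul_one, mul_comm _ (primeIndicator R), ArithmeticFunction.add_apply,
    coe_mul_zeta_apply, natCoe_apply, zeta_apply_ne hn, Nat.cast_one, add_comm]
  simp only [primeIndicator, coe_mk, sum_boole, ← Nat.primeFactors_eq_to_filter_divisors_prime,
    cardDistinctFactors_apply, ← Nat.toFinset_factors, List.card_toFinset]

noncomputable def signedCOmega : ArithmeticFunction ℝ :=
  ⟨fun n => if n = 0 then 0 else (-1) ^ Ω n * COmega n, by simp⟩

lemma one_add_primeIndicator_mul_signedCOmega : (1 + primeIndicator ℝ) * signedCOmega = 1 := by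
  ext n
  rw [add_mul, one_mul, ArithmeticFunction.add_apply, primeIndicator_mul_apply]
  rcases lt_trichotomy n 1 with hn | rfl | hn
  · simp [Nat.lt_one_iff.mp hn]
  · simp [signedCOmega, COmega]
  have hterm : ∀ p ∈ n.primeFactors,
      signedCOmega (n / p) = -((-1) ^ Ω n * COmega (n / p)) := by
    intro p hp
    obtain ⟨hp', ⟨m, rfl⟩, hn0⟩ := Nat.mem_primeFactors.mp hp
    have hm : m ≠ 0 := right_ne_zero_of_mul hn0
    simp [signedCOmega, Nat.mul_div_cancel_left m hp'.pos, hm, cardFactors_mul hp'.ne_zero hm,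
      cardFactors_apply_prime hp']
    ring
  rw [sum_congr rfl hterm, sum_neg_distrib, ← mul_sum, ← COmega_eq_sum_primeFactors hn]
  simp [signedCOmega, one_apply_ne hn.ne', show n ≠ 0 by omega]

lemma moebius_eq_neg_one_pow_mul_sq {R : Type*} [Ring R] (n : ℕ) :
    (μ n : R) = (-1) ^ Ω n * (μ n : R) ^ 2 := by
  by_cases hn : Squarefree n
  · rw [moebius_apply_of_squarefree hn]
    push_cast
    rw [← pow_mul, mul_comm, pow_mul, neg_one_sq, one_pow, mul_one]
  · simp [moebius_eq_zero_of_not_squarefree hn]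

lemma coe_moebius_mul_signedCOmega_apply (n : ℕ) :
    ((μ : ArithmeticFunction ℝ) * signedCOmega) n =
      (-1) ^ Ω n * ∑ d ∈ n.divisors, (μ (n / d) : ℝ) ^ 2 * COmega d := by
  rw [mul_apply, mul_sum,
    Nat.sum_divisorsAntidiagonal' (fun a b => (μ : ArithmeticFunction ℝ) a * signedCOmega b)]
  refine sum_congr rfl fun d hd => ?_
  obtain ⟨hdn, hn⟩ := Nat.mem_divisors.mp hd
  have hd0 : d ≠ 0 := ne_zero_of_dvd_ne_zero hn hdn
  have hΩ : Ω (n / d) + Ω d = Ω n := by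
    rw [← cardFactors_mul ((Nat.div_ne_zero_iff_of_dvd hdn).mpr ⟨hn, hd0⟩) hd0,
      Nat.div_mul_cancel hdn]
  conv_lhs => rw [intCoe_apply, moebius_eq_neg_one_pow_mul_sq (n / d)]
  simp only [signedCOmega, coe_mk, hd0, if_false]
  rw [← hΩ, pow_add]
  ring

theorem stmt_10_general (g ginv : ArithmeticFunction ℝ)
    (hg : ∀ n : ℕ, 0 < n → g n = (ArithmeticFunction.cardDistinctFactors n : ℝ) + 1)
    (hginv : g * ginv = 1) (n : ℕ) :
    |ginv n| =
      ∑ d ∈ n.divisors, (ArithmeticFunction.moebius (n / d) : ℝ) ^ 2 * COmega d := by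
  have hg' : g = (ζ : ArithmeticFunction ℝ) * (1 + primeIndicator ℝ) := by
    ext m
    rcases eq_or_ne m 0 with rfl | hm
    · simp
    rw [hg m (Nat.pos_of_ne_zero hm), coe_zeta_mul_one_add_primeIndicator_apply hm]
  have hinv : (μ : ArithmeticFunction ℝ) * signedCOmega * g = 1 := by
    rw [hg', mul_mul_mul_comm, coe_moebius_mul_coe_zeta, mul_comm signedCOmega,
      one_add_primeIndicator_mul_signedCOmega, one_mul]
  rw [← left_inv_eq_right_inv hinv hginv, coe_moebius_mul_signedCOmega_apply, abs_mul, abs_pow,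
    abs_neg, abs_one, one_pow, one_mul, abs_of_nonneg]
  exact sum_nonneg fun d _ => mul_nonneg (sq_nonneg _) (COmega_nonneg d)

/-- Let `g` be the arithmetic function with `g(n) = ω(n) + 1` for `n ≥ 1`
and let `ginv` be its Dirichlet inverse (characterized by `g * ginv = 1`).  Then for every
positive integer `n`, `|ginv(n)| = ∑_{d ∣ n} μ(n/d)² · C_Ω(d)`. -/
theorem stmt_10 (g ginv : ArithmeticFunction ℝ)
    (hg : ∀ n : ℕ, 0 < n → g n = (ArithmeticFunction.cardDistinctFactors n : ℝ) + 1)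
    (hginv : g * ginv = 1) (n : ℕ) (hn : 0 < n) :
    |ginv n| =
      ∑ d ∈ n.divisors, (ArithmeticFunction.moebius (n / d) : ℝ) ^ 2 * COmega d :=
  stmt_10_general g ginv hg hginv n
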